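/- arXiv:0807.2668 — 2 statements merged into one kernel-verified Lean document; each statement's English description precedes it below -/
import Mathlib

section
/- The Haar second-moment identity: ∫ (vec(U)vec(U)* ⊗ vec(U)vec(U)*) dμ(U) = (2/(d(d−1))) R_{Y1⊗Y2} ⊗ R_{X1⊗X2} + (2/(d(d+1))) S_{Y1⊗Y2} ⊗ S_{X1⊗X2}, with suitable reordering of tensor factors so that the left side lies in L(Y1 ⊗ X1 ⊗ Y2 ⊗ X2). -/
open Matrix MeasureTheory
open scoped Kronecker ComplexOrder

/-- vec(A): vec(|i⟩⟨j|) = |i⟩ ⊗ |j⟩. -/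
def vec {d : ℕ} (A : Matrix (Fin d) (Fin d) ℂ) : Fin d × Fin d → ℂ := fun p => A p.1 p.2

/-- The rank-one operator vec(A) vec(A)*. -/
noncomputable def outer {d : ℕ} (A : Matrix (Fin d) (Fin d) ℂ) :
    Matrix (Fin d × Fin d) (Fin d × Fin d) ℂ :=
  vecMulVec (_root_.vec A) (star (_root_.vec A))

/-- Choi–Jamiołkowski representation J(Φ) = Σ_{i,j} Φ(|i⟩⟨j|) ⊗ |i⟩⟨j|. -/
noncomputable def choi {d : ℕ} (Φ : Matrix (Fin d) (Fin d) ℂ → Matrix (Fin d) (Fin d) ℂ) :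
    Matrix (Fin d × Fin d) (Fin d × Fin d) ℂ :=
  ∑ i, ∑ j, (Φ (Matrix.single i j 1)) ⊗ₖ (Matrix.single i j 1)

/-- Partial trace over the first (Y) tensor factor. -/
noncomputable def ptraceLeft {d : ℕ} (M : Matrix (Fin d × Fin d) (Fin d × Fin d) ℂ) :
    Matrix (Fin d) (Fin d) ℂ :=
  Matrix.of fun i j => ∑ k, M (k, i) (k, j)

/-- Partial trace over the second (X) tensor factor. -/
noncomputable def ptraceRight {d : ℕ} (M : Matrix (Fin d × Fin d) (Fin d × Fin d) ℂ) :
    Matrix (Fin d) (Fin d) ℂ :=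
  Matrix.of fun i j => ∑ k, M (i, k) (j, k)

/-- The swap operator W on Y ⊗ X. -/
def swapOp (d : ℕ) : Matrix (Fin d × Fin d) (Fin d × Fin d) ℂ :=
  Matrix.of fun p q => if p.1 = q.2 ∧ p.2 = q.1 then 1 else 0

/-- Antisymmetric projection R = (1 - W)/2. -/
noncomputable def projR (d : ℕ) : Matrix (Fin d × Fin d) (Fin d × Fin d) ℂ :=
  (2 : ℂ)⁻¹ • (1 - swapOp d)

/-- Symmetric projection S = (1 + W)/2. -/
noncomputable def projS (d : ℕ) : Matrix (Fin d × Fin d) (Fin d × Fin d) ℂ :=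
  (2 : ℂ)⁻¹ • (1 + swapOp d)

/-- Hilbert–Schmidt inner product ⟨A,B⟩ = Tr(A* B). -/
noncomputable def hsInner {n : Type*} [Fintype n] (A B : Matrix n n ℂ) : ℂ := (Aᴴ * B).trace

/-- Mixed-unitary channel: a finite convex combination of unitary conjugations. -/
def IsMixedUnitary {d : ℕ} (Φ : Matrix (Fin d) (Fin d) ℂ → Matrix (Fin d) (Fin d) ℂ) : Prop :=
  ∃ (N : ℕ) (p : Fin N → ℝ) (U : Fin N → Matrix.unitaryGroup (Fin d) ℂ),
    (∀ i, 0 ≤ p i) ∧ (∑ i, p i) = 1 ∧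
    ∀ X, Φ X = ∑ i, (p i : ℂ) •
      ((U i : Matrix (Fin d) (Fin d) ℂ) * X * star (U i : Matrix (Fin d) (Fin d) ℂ))

/-- Complete positivity: every extension 1_n ⊗ Φ maps PSD matrices to PSD matrices. -/
def IsCompletelyPositive {d : ℕ}
    (Φ : Matrix (Fin d) (Fin d) ℂ → Matrix (Fin d) (Fin d) ℂ) : Prop :=
  ∀ (n : ℕ) (M : Matrix (Fin n × Fin d) (Fin n × Fin d) ℂ), M.PosSemidef →
    (Matrix.of fun p q : Fin n × Fin d =>
      Φ (Matrix.of fun i j => M (p.1, i) (q.1, j)) p.2 q.2).PosSemidef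

/-- The completely depolarizing channel Ω(X) = (Tr X / d) 1. -/
noncomputable def depol {d : ℕ} (X : Matrix (Fin d) (Fin d) ℂ) : Matrix (Fin d) (Fin d) ℂ :=
  (X.trace / (d : ℂ)) • 1

/-- The Borel σ-algebra on matrices (the product σ-algebra of the Borel σ-algebra on ℂ,
which coincides with the Borel σ-algebra of the product topology). -/
noncomputable instance {d : ℕ} : MeasurableSpace (Matrix (Fin d) (Fin d) ℂ) :=
  (inferInstance : MeasurableSpace (Fin d → Fin d → ℂ))

/-- The induced Borel σ-algebra on the unitary group U(d). -/
noncomputable instance {d : ℕ} : MeasurableSpace (Matrix.unitaryGroup (Fin d) ℂ) :=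
  Subtype.instMeasurableSpace


/-!
Left invariance of `μ` makes `T = ∫ (U ⊗ U) |x⟩⟨y| (U ⊗ U)* dμ(U)` commute with every `V ⊗ V`,
`V` unitary. Such a matrix is `α 1 + β W`: conjugating by diagonal phase matrices kills the
entries whose row and column index pairs differ as multisets, permutation matrices show that the
remaining entries take only three values, and a Householder reflection mixing two basis vectors
ties the diagonal value to the other two. Since `U ⊗ U` is unitary and commutes with `W`, the
pointwise identities `tr T = ⟨y|x⟩` and `tr (W T) = ⟨y|W|x⟩` determine `α` and `β`; writing
`1 = R + S` and `W = S - R` gives the stated formula.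
-/

open Complex in
/-- The phase at `s` is `I ^ k`, `k` the number of occurrences of `s`, and `1, I, I ^ 2` are
distinct. -/
lemma eq_or_swap_of_forall_phase {α : Type*} [DecidableEq α] {a b c e : α}
    (h : ∀ s : α, (if a = s then I else 1) * (if c = s then I else 1)
        = (if b = s then I else 1) * (if e = s then I else 1)) :
    (a = b ∧ c = e) ∨ (a = e ∧ c = b) := by
  have hI : I ≠ 1 := by simp [Complex.ext_iff]
  have hII : I * I ≠ 1 := by rw [I_mul_I]; norm_num
  have hII' : I * I ≠ I := by simp [Complex.ext_iff]
  have ha := h a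
  have hc := h c
  split_ifs at ha hc <;> grind

lemma exists_perm_apply_eq_apply_eq {α : Type*} [DecidableEq α] {a c i j : α} (hac : a ≠ c)
    (hij : i ≠ j) : ∃ σ : Equiv.Perm α, σ a = i ∧ σ c = j := by
  set τ := Equiv.swap a i
  have hτc : τ c ≠ i := fun h => hac (τ.injective (h.trans (Equiv.swap_apply_left a i).symm)).symm
  exact ⟨τ.trans (Equiv.swap (τ c) j),
    by simp [τ, Equiv.swap_apply_of_ne_of_ne hτc.symm hij], by simp⟩

lemma mul_apply_mul_star_mul_apply {n : Type*} [Fintype n] (A X : Matrix n n ℂ) (p x q y : n) :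
    (A * X) p x * star ((A * X) q y)
      = ∑ s, ∑ r, A p r * (X r x * star (X s y)) * star (A q s) := by
  simp only [mul_apply, star_sum, star_mul', Finset.sum_mul_sum]
  rw [Finset.sum_comm]
  exact Finset.sum_congr rfl fun s _ => Finset.sum_congr rfl fun r _ => by ring

section UnitaryMatrices

variable {n : Type*} [DecidableEq n]

lemma permMatrix_kronecker_permMatrix (σ τ : Equiv.Perm n) :
    σ.permMatrix ℂ ⊗ₖ τ.permMatrix ℂ = Equiv.Perm.permMatrix ℂ (σ.prodCongr τ) := by
  ext p q
  simp [PEquiv.toMatrix_apply, Prod.ext_iff, ← ite_and, and_comm]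

variable [Fintype n]

lemma diagonal_mem_unitaryGroup {z : n → ℂ} (hz : ∀ k, star (z k) * z k = 1) :
    diagonal z ∈ unitaryGroup n ℂ := by
  rw [mem_unitaryGroup_iff', star_eq_conjTranspose, diagonal_conjTranspose, diagonal_mul_diagonal,
    ← diagonal_one]
  exact congr_arg diagonal (funext hz)

lemma permMatrix_mem_unitaryGroup (σ : Equiv.Perm n) : σ.permMatrix ℂ ∈ unitaryGroup n ℂ := by
  rw [mem_unitaryGroup_iff, star_eq_conjTranspose, conjTranspose_permMatrix, ← permMatrix_mul,
    inv_mul_cancel, permMatrix_one]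

lemma householder_mem_unitaryGroup {v : n → ℂ} (hv : v ≠ 0) :
    1 - (2 / (star v ⬝ᵥ v)) • vecMulVec v (star v) ∈ unitaryGroup n ℂ := by
  have hs : star v ⬝ᵥ v ≠ 0 := dotProduct_star_self_eq_zero.not.mpr hv
  have hself : star (star v ⬝ᵥ v) = star v ⬝ᵥ v := (star_dotProduct _ _).symm
  have hc : 2 / (star v ⬝ᵥ v) * (2 / (star v ⬝ᵥ v)) * (star v ⬝ᵥ v)
      = 2 / (star v ⬝ᵥ v) + 2 / (star v ⬝ᵥ v) := by
    field_simp
    ring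
  rw [mem_unitaryGroup_iff, star_sub, star_one, star_smul, star_eq_conjTranspose,
    conjTranspose_vecMulVec, star_star, star_div₀, hself, star_ofNat, mul_sub, sub_mul, sub_mul,
    one_mul, mul_one, smul_mul_smul_comm, vecMulVec_mul_vecMulVec, vecMulVec_smul, smul_smul, hc,
    add_smul, one_mul]
  abel

lemma exists_mem_unitaryGroup_apply_mul_apply_ne_zero {i j : n} (hij : i ≠ j) :
    ∃ V ∈ unitaryGroup n ℂ, V i i * V i j ≠ 0 := by
  set v : n → ℂ := Pi.single i 1 + Pi.single j 2
  have hv : star v ⬝ᵥ v = 5 := by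
    rw [dotProduct, Fintype.sum_eq_add i j hij fun k hk => by simp [v, hk.1, hk.2]]
    simp [v, hij, hij.symm]
    norm_num
  refine ⟨_, householder_mem_unitaryGroup (v := v) fun h0 => by simpa [v, hij] using congr_fun h0 i,
    ?_⟩
  rw [hv]
  simp [v, hij, hij.symm, one_apply, vecMulVec_apply]
  norm_num

variable {M : Matrix (n × n) (n × n) ℂ}

lemma mul_apply_eq_of_commute_diagonal_kronecker {z : n → ℂ}
    (h : Commute (diagonal z ⊗ₖ diagonal z) M) (p q : n × n) :
    z p.1 * z p.2 * M p q = z q.1 * z q.2 * M p q := by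
  have := congr_fun (congr_fun h.eq p) q
  simpa [diagonal_kronecker_diagonal, diagonal_mul, mul_diagonal, mul_comm] using this

lemma apply_map_of_commute_permMatrix_kronecker {σ : Equiv.Perm n}
    (h : Commute (σ.permMatrix ℂ ⊗ₖ σ.permMatrix ℂ) M) (p q : n × n) :
    M (Prod.map σ σ p) (Prod.map σ σ q) = M p q := by
  have := congr_fun (congr_fun h.eq p) (Prod.map σ σ q)
  rw [permMatrix_kronecker_permMatrix, PEquiv.toMatrix_toPEquiv_mul,
    PEquiv.mul_toMatrix_toPEquiv] at this
  simpa [Prod.map_map, Equiv.symm_comp_self] using this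

open Complex in
lemma apply_eq_zero_of_commute (hM : ∀ V ∈ unitaryGroup n ℂ, Commute (V ⊗ₖ V) M)
    {a b c e : n} (h : ¬((a = b ∧ c = e) ∨ (a = e ∧ c = b))) : M (a, c) (b, e) = 0 := by
  by_contra hne
  refine h (eq_or_swap_of_forall_phase fun s => mul_right_cancel₀ hne ?_)
  refine mul_apply_eq_of_commute_diagonal_kronecker
    (hM _ (diagonal_mem_unitaryGroup (z := fun k => if k = s then I else 1) fun k => ?_)) (a, c) (b, e)
  split_ifs <;> simp

end UnitaryMatrices

section SwapOperator

variable {d : ℕ}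

local notation "𝕄" => Matrix (Fin d × Fin d) (Fin d × Fin d) ℂ

lemma swapOp_mul_apply (X : 𝕄) (p q : Fin d × Fin d) : (swapOp d * X) p q = X p.swap q := by
  simp [swapOp, mul_apply, ite_and, Fintype.sum_prod_type, Prod.swap]

lemma mul_swapOp_apply (X : 𝕄) (p q : Fin d × Fin d) : (X * swapOp d) p q = X p q.swap := by
  simp [swapOp, mul_apply, ite_and, Fintype.sum_prod_type, Prod.swap]

lemma one_apply_swap (p q : Fin d × Fin d) : (1 : 𝕄) p.swap q = swapOp d p q := by
  simp [swapOp, one_apply, Prod.ext_iff, eq_comm, and_comm]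

lemma swapOp_mul_swapOp : swapOp d * swapOp d = 1 := by
  ext p q
  rw [swapOp_mul_apply, ← one_apply_swap, Prod.swap_swap]

lemma trace_swapOp : (swapOp d).trace = d := by
  simp only [trace, diag, swapOp, of_apply, Fintype.sum_prod_type]
  simp [eq_comm]

lemma swapOp_mul_kronecker (A B : Matrix (Fin d) (Fin d) ℂ) :
    swapOp d * (A ⊗ₖ B) = (B ⊗ₖ A) * swapOp d := by
  ext p q
  simp [swapOp_mul_apply, mul_swapOp_apply, mul_comm]

lemma trace_smul_one_add_smul_swapOp (α β : ℂ) :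
    (α • (1 : 𝕄) + β • swapOp d).trace = d ^ 2 * α + d * β := by
  simp [trace_add, trace_smul, trace_swapOp, Fintype.card_prod]
  ring

lemma trace_swapOp_mul_smul_one_add_smul_swapOp (α β : ℂ) :
    (swapOp d * (α • (1 : 𝕄) + β • swapOp d)).trace = d * α + d ^ 2 * β := by
  simp [mul_add, swapOp_mul_swapOp, trace_add, trace_smul, trace_swapOp, Fintype.card_prod]
  ring

lemma eq_smul_one_add_smul_swapOp_add_smul_diagonal_of_commute {M : 𝕄}
    (hM : ∀ V ∈ unitaryGroup (Fin d) ℂ, Commute (V ⊗ₖ V) M) {i j : Fin d} (hij : i ≠ j) :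
    M = M (i, j) (i, j) • 1 + M (i, j) (j, i) • swapOp d
      + (M (i, i) (i, i) - M (i, j) (i, j) - M (i, j) (j, i))
        • diagonal (fun p : Fin d × Fin d => if p.1 = p.2 then 1 else 0) := by
  have hperm : ∀ σ : Equiv.Perm (Fin d), ∀ p q, M (Prod.map σ σ p) (Prod.map σ σ q) = M p q :=
    fun σ => apply_map_of_commute_permMatrix_kronecker (hM _ (permMatrix_mem_unitaryGroup σ))
  have hA : ∀ a c, a ≠ c → M (a, c) (a, c) = M (i, j) (i, j) := fun a c hac => by
    obtain ⟨σ, ha, hc⟩ := exists_perm_apply_eq_apply_eq hac hij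
    simpa [ha, hc] using (hperm σ (a, c) (a, c)).symm
  have hB : ∀ a c, a ≠ c → M (a, c) (c, a) = M (i, j) (j, i) := fun a c hac => by
    obtain ⟨σ, ha, hc⟩ := exists_perm_apply_eq_apply_eq hac hij
    simpa [ha, hc] using (hperm σ (a, c) (c, a)).symm
  have hC : ∀ a, M (a, a) (a, a) = M (i, i) (i, i) := fun a => by
    simpa using (hperm (Equiv.swap a i) (a, a) (a, a)).symm
  ext ⟨a, c⟩ ⟨b, e⟩
  simp only [Matrix.add_apply, Matrix.smul_apply, one_apply, swapOp, of_apply, diagonal_apply,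
    Prod.mk.injEq, smul_eq_mul]
  by_cases h₁ : a = b ∧ c = e
  · obtain ⟨rfl, rfl⟩ := h₁
    by_cases hac : a = c
    · subst hac
      simp [hC]
    · simp [hac, Ne.symm hac, hA a c hac]
  · by_cases h₂ : a = e ∧ c = b
    · obtain ⟨rfl, rfl⟩ := h₂
      have hac : a ≠ c := fun h => h₁ ⟨h, h.symm⟩
      simp [hac, Ne.symm hac, hB a c hac]
    · simp [apply_eq_zero_of_commute hM (not_or.mpr ⟨h₁, h₂⟩), h₁, h₂]

theorem eq_smul_one_add_smul_swapOp_of_commute {M : 𝕄}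
    (hM : ∀ V ∈ unitaryGroup (Fin d) ℂ, Commute (V ⊗ₖ V) M) {i j : Fin d} (hij : i ≠ j) :
    M = M (i, j) (i, j) • 1 + M (i, j) (j, i) • swapOp d := by
  have hstruct := eq_smul_one_add_smul_swapOp_add_smul_diagonal_of_commute hM hij
  set A := M (i, j) (i, j)
  set B := M (i, j) (j, i)
  set δ := M (i, i) (i, i) - A - B
  set P : 𝕄 := diagonal fun p => if p.1 = p.2 then 1 else 0
  have hδ : δ = 0 := by
    obtain ⟨V, hV, hVij⟩ := exists_mem_unitaryGroup_apply_mul_apply_ne_zero hij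
    have hcomm : Commute (V ⊗ₖ V) (δ • P) := by
      have hW : Commute (V ⊗ₖ V) (swapOp d) := (swapOp_mul_kronecker V V).symm
      have hsym : Commute (V ⊗ₖ V) (A • 1 + B • swapOp d) :=
        ((Commute.one_right _).smul_right A).add_right (hW.smul_right B)
      have hP : M - (A • 1 + B • swapOp d) = δ • P := by
        rw [hstruct]
        abel
      simpa [hP] using (hM V hV).sub_right hsym
    -- the `((i, i), (i, j))` entries of `(V ⊗ V) P` and `P (V ⊗ V)` are `0` and `V i i * V i j`
    have hentry := congr_fun (congr_fun hcomm.eq (i, i)) (i, j)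
    simpa [P, mul_diagonal, diagonal_mul, hij, hVij] using hentry
  rwa [hδ, zero_smul, add_zero] at hstruct

end SwapOperator

section Twirl

variable {d : ℕ} (μ : Measure (unitaryGroup (Fin d) ℂ))

local notation "𝕄" => Matrix (Fin d × Fin d) (Fin d × Fin d) ℂ

lemma measurable_unitaryGroup_apply (i j : Fin d) :
    Measurable fun U : unitaryGroup (Fin d) ℂ => (U : Matrix (Fin d) (Fin d) ℂ) i j :=
  (measurable_subtype_coe (α := Matrix (Fin d) (Fin d) ℂ)).eval.eval

lemma measurable_unitaryGroup_mul_left (V : unitaryGroup (Fin d) ℂ) :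
    Measurable fun U : unitaryGroup (Fin d) ℂ => V * U := by
  refine Measurable.subtype_mk (measurable_pi_lambda _ fun i => measurable_pi_lambda _ fun j => ?_)
  simp only [mul_apply]
  exact Finset.measurable_sum _ fun k _ => (measurable_unitaryGroup_apply k j).const_mul _

lemma integral_unitaryGroup_comp_mul_left
    (hinv : ∀ V : unitaryGroup (Fin d) ℂ, μ.map (fun U => V * U) = μ)
    (V : unitaryGroup (Fin d) ℂ) {f : unitaryGroup (Fin d) ℂ → ℂ} (hf : AEStronglyMeasurable f μ) :
    ∫ U, f (V * U) ∂μ = ∫ U, f U ∂μ := by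
  conv_rhs => rw [← hinv V]
  rw [integral_map (measurable_unitaryGroup_mul_left V).aemeasurable (by rwa [hinv V])]

/-- The entries of `∫ (U ⊗ U) |x⟩⟨y| (U ⊗ U)* dμ(U)`. -/
noncomputable def twirl (x y : Fin d × Fin d) : 𝕄 :=
  of fun p q => ∫ U, (U ⊗ₖ U : 𝕄) p x * star ((U ⊗ₖ U : 𝕄) q y) ∂μ

lemma integrable_kronecker_apply_mul_star [IsFiniteMeasure μ] (p x q y : Fin d × Fin d) :
    Integrable (fun U : unitaryGroup (Fin d) ℂ => (U ⊗ₖ U : 𝕄) p x * star ((U ⊗ₖ U : 𝕄) q y)) μ := by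
  refine Integrable.of_bound (C := 1) ?_ (Filter.Eventually.of_forall fun U => ?_)
  · exact (((measurable_unitaryGroup_apply _ _).mul (measurable_unitaryGroup_apply _ _)).mul
      (continuous_star.measurable.comp ((measurable_unitaryGroup_apply _ _).mul
        (measurable_unitaryGroup_apply _ _)))).aestronglyMeasurable
  · have h := entry_norm_bound_of_unitary (kronecker_mem_unitary U.2 U.2)
    rw [norm_mul, norm_star]
    exact mul_le_one₀ (h _ _) (norm_nonneg _) (h _ _)

lemma kronecker_mul_twirl_mul_conjTranspose [IsFiniteMeasure μ]
    (hinv : ∀ V : unitaryGroup (Fin d) ℂ, μ.map (fun U => V * U) = μ)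
    (V : unitaryGroup (Fin d) ℂ) (x y : Fin d × Fin d) :
    (V ⊗ₖ V : 𝕄) * twirl μ x y * (V ⊗ₖ V : 𝕄)ᴴ = twirl μ x y := by
  ext p q
  have hint : ∀ r s, Integrable (fun U : unitaryGroup (Fin d) ℂ =>
      (V ⊗ₖ V : 𝕄) p r * ((U ⊗ₖ U : 𝕄) r x * star ((U ⊗ₖ U : 𝕄) s y)) * star ((V ⊗ₖ V : 𝕄) q s)) μ :=
    fun r s => ((integrable_kronecker_apply_mul_star μ r x s y).const_mul _).mul_const _
  calc _ = ∑ s, ∑ r, ∫ U, (V ⊗ₖ V : 𝕄) p r * ((U ⊗ₖ U : 𝕄) r x * star ((U ⊗ₖ U : 𝕄) s y)) *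
        star ((V ⊗ₖ V : 𝕄) q s) ∂μ := by
        simp only [mul_apply, conjTranspose_apply, Finset.sum_mul, twirl, of_apply,
          integral_mul_const, integral_const_mul]
    _ = ∫ U, ((V * U) ⊗ₖ (V * U) : 𝕄) p x * star (((V * U) ⊗ₖ (V * U) : 𝕄) q y) ∂μ := by
        simp only [Submonoid.coe_mul, mul_kronecker_mul, mul_apply_mul_star_mul_apply]
        rw [integral_finsetSum _ fun s _ => integrable_finsetSum _ fun r _ => hint r s]
        exact Finset.sum_congr rfl fun s _ => (integral_finsetSum _ fun r _ => hint r s).symm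
    _ = twirl μ x y p q :=
        integral_unitaryGroup_comp_mul_left μ hinv V
          (integrable_kronecker_apply_mul_star μ p x q y).aestronglyMeasurable

lemma commute_kronecker_twirl [IsFiniteMeasure μ]
    (hinv : ∀ V : unitaryGroup (Fin d) ℂ, μ.map (fun U => V * U) = μ)
    (V : unitaryGroup (Fin d) ℂ) (x y : Fin d × Fin d) :
    Commute (V ⊗ₖ V : 𝕄) (twirl μ x y) := by
  have hV : (V ⊗ₖ V : 𝕄)ᴴ * (V ⊗ₖ V) = 1 := (kronecker_mem_unitary V.2 V.2).1
  calc (V ⊗ₖ V : 𝕄) * twirl μ x y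
      = (V ⊗ₖ V : 𝕄) * twirl μ x y * ((V ⊗ₖ V : 𝕄)ᴴ * (V ⊗ₖ V)) := by rw [hV, mul_one]
    _ = twirl μ x y * (V ⊗ₖ V) := by
        rw [← mul_assoc, kronecker_mul_twirl_mul_conjTranspose μ hinv]

lemma trace_twirl [IsProbabilityMeasure μ] (x y : Fin d × Fin d) :
    (twirl μ x y).trace = (1 : 𝕄) x y := by
  have hcol : ∀ U : unitaryGroup (Fin d) ℂ,
      ∑ p, (U ⊗ₖ U : 𝕄) p x * star ((U ⊗ₖ U : 𝕄) p y) = (1 : 𝕄) x y := by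
    intro U
    calc ∑ p, (U ⊗ₖ U : 𝕄) p x * star ((U ⊗ₖ U : 𝕄) p y)
        = (star (U ⊗ₖ U : 𝕄) * (U ⊗ₖ U : 𝕄)) y x := by
          simp only [mul_apply, star_apply, mul_comm]
      _ = (1 : 𝕄) x y := by
          rw [(kronecker_mem_unitary U.2 U.2).1, one_apply, one_apply]
          exact if_congr eq_comm rfl rfl
  simp only [trace, diag, twirl, of_apply]
  rw [← integral_finsetSum _ fun p _ => integrable_kronecker_apply_mul_star μ p x p y]
  simp only [hcol, integral_const, probReal_univ, one_smul]

lemma swapOp_mul_twirl (x y : Fin d × Fin d) : swapOp d * twirl μ x y = twirl μ x.swap y := by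
  ext p q
  simp only [swapOp_mul_apply, twirl, of_apply]
  congr 1 with U
  simp only [kroneckerMap_apply, Prod.fst_swap, Prod.snd_swap, mul_comm]

theorem twirl_eq_smul_one_add_smul_swapOp [IsProbabilityMeasure μ]
    (hinv : ∀ V : unitaryGroup (Fin d) ℂ, μ.map (fun U => V * U) = μ) (hd : 1 < d)
    (x y : Fin d × Fin d) :
    twirl μ x y = ((d * (1 : 𝕄) x y - swapOp d x y) / (d * (d ^ 2 - 1))) • 1
      + ((d * swapOp d x y - (1 : 𝕄) x y) / (d * (d ^ 2 - 1))) • swapOp d := by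
  have hdecomp := eq_smul_one_add_smul_swapOp_of_commute
    (fun V hV => commute_kronecker_twirl μ hinv ⟨V, hV⟩ x y)
    (i := ⟨0, by omega⟩) (j := ⟨1, hd⟩) (by simp [Fin.ext_iff])
  have htrace := trace_twirl μ x y
  have htraceW : (swapOp d * twirl μ x y).trace = swapOp d x y := by
    rw [swapOp_mul_twirl, trace_twirl, one_apply_swap]
  rw [hdecomp, trace_smul_one_add_smul_swapOp] at htrace
  rw [hdecomp, trace_swapOp_mul_smul_one_add_smul_swapOp] at htraceW
  have hd₀ : (d : ℂ) ≠ 0 := by exact_mod_cast (by omega : d ≠ 0)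
  have hd₁ : (d : ℂ) ^ 2 - 1 ≠ 0 := by
    rw [sub_ne_zero]
    exact_mod_cast (by nlinarith : d ^ 2 ≠ 1)
  rw [hdecomp]
  congr 2
  · field_simp
    linear_combination (d : ℂ) * htrace - htraceW
  · field_simp
    linear_combination (d : ℂ) * htraceW - htrace

end Twirl

theorem stmt9 (d : ℕ) (hd : 1 < d) (μ : Measure (Matrix.unitaryGroup (Fin d) ℂ)) [IsProbabilityMeasure μ]
    (hinv : ∀ V : Matrix.unitaryGroup (Fin d) ℂ, μ.map (fun U => V * U) = μ) :
    ∀ p q : (Fin d × Fin d) × (Fin d × Fin d),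
      (∫ U, outer (U : Matrix (Fin d) (Fin d) ℂ) p.1 q.1 * outer (U : Matrix (Fin d) (Fin d) ℂ) p.2 q.2 ∂μ)
        = (2 / ((d : ℂ) * ((d : ℂ) - 1))) *
            (projR d (p.1.1, p.2.1) (q.1.1, q.2.1) * projR d (p.1.2, p.2.2) (q.1.2, q.2.2))
        + (2 / ((d : ℂ) * ((d : ℂ) + 1))) *
            (projS d (p.1.1, p.2.1) (q.1.1, q.2.1) * projS d (p.1.2, p.2.2) (q.1.2, q.2.2)) := by
  rintro ⟨⟨a₁, a₂⟩, c₁, c₂⟩ ⟨⟨b₁, b₂⟩, e₁, e₂⟩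
  have hLHS : ∫ U, outer (U : Matrix (Fin d) (Fin d) ℂ) (a₁, a₂) (b₁, b₂) *
      outer (U : Matrix (Fin d) (Fin d) ℂ) (c₁, c₂) (e₁, e₂) ∂μ
      = twirl μ (a₂, c₂) (b₂, e₂) (a₁, c₁) (b₁, e₁) := by
    simp only [twirl, of_apply]
    congr 1 with U
    simp only [outer, _root_.vec, vecMulVec_apply, Pi.star_apply, kroneckerMap_apply, star_mul']
    ring
  have hd₀ : (d : ℂ) ≠ 0 := by exact_mod_cast (by omega : d ≠ 0)
  have hdm : (d : ℂ) - 1 ≠ 0 := by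
    rw [sub_ne_zero]
    exact_mod_cast (by omega : d ≠ 1)
  have hdp : (d : ℂ) + 1 ≠ 0 := by exact_mod_cast (by omega : d + 1 ≠ 0)
  have hd₁ : (d : ℂ) ^ 2 - 1 ≠ 0 := by
    rw [show (d : ℂ) ^ 2 - 1 = (d - 1) * (d + 1) by ring]
    exact mul_ne_zero hdm hdp
  rw [hLHS, twirl_eq_smul_one_add_smul_swapOp μ hinv hd]
  simp only [projR, projS, Matrix.add_apply, Matrix.sub_apply, Matrix.smul_apply, smul_eq_mul]
  field_simp
  ring
end

section
/- If ν is a Borel probability measure on the unitary group U(X, Y) between d-dimensional spaces, then the channel Φ(X) = ∫ U X U* dν(U) can be written as a finite convex combination Φ(X) = Σ_{i=1}^N p_i U_i X U_i* of unitary conjugations, with N ≤ d⁴ − 2d² + 2. -/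
open Matrix MeasureTheory
open scoped Kronecker ComplexOrder

/-!
Write `outer U = vec U (vec U)*` for the Choi matrix of `X ↦ U X U*`. The Choi matrix of the
averaged channel is `∫ outer U dν(U)`, which lies in the convex hull of the compact set
`outer '' U(d)`, so Carathéodory's theorem writes it as a convex combination of at most `m + 1`
points `outer Uᵢ`, where `m` is the dimension of the affine hull of `outer '' U(d)`.
Every `outer U` is Hermitian with both partial traces equal to `1`, so `m` is at most the real
dimension of the Hermitian matrices with vanishing partial traces. That is at most the complex
dimension of the kernel of the partial traces, which is `d⁴` minus a rank of at least `2d² - 1`: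
on Kronecker sums `A ⊗ 1 + 1 ⊗ B` the partial traces only vanish along the line of `(1, -1)`.
-/

open Module

section Caratheodory

variable {E : Type*} [AddCommGroup E] [Module ℝ E] [FiniteDimensional ℝ E]

theorem exists_fin_convex_combination_of_mem_convexHull {s : Set E} {x : E}
    (hx : x ∈ convexHull ℝ s) :
    ∃ N ≤ finrank ℝ (vectorSpan ℝ s) + 1, ∃ (w : Fin N → ℝ) (z : Fin N → E),
      (∀ i, 0 ≤ w i) ∧ ∑ i, w i = 1 ∧ (∀ i, z i ∈ s) ∧ ∑ i, w i • z i = x := by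
  obtain ⟨ι, _, z, w, hzs, hz, hw0, hw1, rfl⟩ := eq_pos_convex_span_of_mem_convexHull hx
  let e := (Fintype.equivFin ι).symm
  have hN : Fintype.card ι ≤ finrank ℝ (vectorSpan ℝ s) + 1 :=
    hz.card_le_finrank_succ.trans
      (Nat.add_le_add_right (Submodule.finrank_mono (vectorSpan_mono ℝ hzs)) 1)
  exact ⟨Fintype.card ι, hN, w ∘ e, z ∘ e, fun i => (hw0 _).le, (e.sum_comp w).trans hw1,
    fun i => hzs ⟨_, rfl⟩, e.sum_comp fun i => w i • z i⟩

end Caratheodory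

section Topology

variable {E : Type*} [NormedAddCommGroup E] [NormedSpace ℝ E] [FiniteDimensional ℝ E]

theorem IsCompact.convexHull {K : Set E} (hK : IsCompact K) :
    IsCompact (_root_.convexHull ℝ K) := by
  have hcover : _root_.convexHull ℝ K = ⋃ N ∈ Set.Iic (finrank ℝ E + 1),
      (fun p : (Fin N → ℝ) × (Fin N → E) => ∑ i, p.1 i • p.2 i) ''
        (stdSimplex ℝ (Fin N) ×ˢ Set.univ.pi fun _ => K) := by
    refine Set.Subset.antisymm (fun x hx => ?_) ?_
    · obtain ⟨N, hN, w, z, hw0, hw1, hzK, rfl⟩ :=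
        exists_fin_convex_combination_of_mem_convexHull hx
      exact Set.mem_biUnion (hN.trans (by gcongr; exact Submodule.finrank_le _))
        ⟨(w, z), ⟨⟨hw0, hw1⟩, fun i _ => hzK i⟩, rfl⟩
    · refine Set.iUnion₂_subset fun N _ => ?_
      rintro _ ⟨⟨w, z⟩, ⟨⟨hw0, hw1⟩, hzK⟩, rfl⟩
      exact (convex_convexHull ℝ K).sum_mem (fun i _ => hw0 i) hw1
        fun i _ => subset_convexHull ℝ K (hzK i trivial)
  rw [hcover]
  refine (Set.finite_Iic _).isCompact_biUnion fun N _ => ?_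
  exact ((isCompact_stdSimplex ℝ (Fin N)).prod (isCompact_univ_pi fun _ => hK)).image
    (by fun_prop)

theorem exists_integral_eq_convex_combination {X : Type*} [TopologicalSpace X] [CompactSpace X]
    [MeasurableSpace X] [OpensMeasurableSpace X] (μ : Measure X) [IsProbabilityMeasure μ]
    {f : X → E} (hf : Continuous f) :
    ∃ N ≤ finrank ℝ (vectorSpan ℝ (Set.range f)) + 1,
    ∃ (w : Fin N → ℝ) (x : Fin N → X),
      (∀ i, 0 ≤ w i) ∧ ∑ i, w i = 1 ∧ ∫ y, f y ∂μ = ∑ i, w i • f (x i) := by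
  have hmem : ∫ y, f y ∂μ ∈ convexHull ℝ (Set.range f) :=
    (convex_convexHull ℝ _).integral_mem (isCompact_range hf).convexHull.isClosed
      (.of_forall fun y => subset_convexHull ℝ _ ⟨y, rfl⟩)
      (hf.integrable_of_hasCompactSupport (.of_compactSpace f))
  obtain ⟨N, hN, w, z, hw0, hw1, hzf, hsum⟩ :=
    exists_fin_convex_combination_of_mem_convexHull hmem
  choose x hx using hzf
  exact ⟨N, hN, w, x, hw0, hw1, by simp only [hx, hsum]⟩

end Topology

section SelfAdjoint

variable {A : Type*} [AddCommGroup A] [Module ℂ A] [StarAddMonoid A] [StarModule ℂ A]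
  [Module ℝ A] [IsScalarTower ℝ ℂ A] [StarModule ℝ A] [FiniteDimensional ℂ A]

theorem finrank_selfAdjoint_inf_restrictScalars_le (W : Submodule ℂ A) :
    finrank ℝ ↥(selfAdjoint.submodule ℝ A ⊓ W.restrictScalars ℝ) ≤ finrank ℂ W := by
  have : FiniteDimensional ℝ A := Module.Finite.trans ℂ A
  have : FiniteDimensional ℝ W := Module.Finite.trans ℂ W
  set H := selfAdjoint.submodule ℝ A ⊓ W.restrictScalars ℝ
  -- `h + i k` is the decomposition into self-adjoint and skew-adjoint parts, hence injective.
  let φ : H × H →ₗ[ℝ] W :=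
    { toFun := fun p =>
        ⟨p.1 + Complex.I • (p.2 : A), W.add_mem p.1.2.2 (W.smul_mem _ p.2.2.2)⟩
      map_add' := fun p q => by
        ext
        simp only [Prod.fst_add, Prod.snd_add, Submodule.coe_add, smul_add]
        abel
      map_smul' := fun r p => by ext; simp [smul_add, smul_comm r Complex.I] }
  have hφ : Function.Injective φ := by
    rw [← LinearMap.ker_eq_bot, Submodule.eq_bot_iff]
    rintro ⟨h, k⟩ hp
    have hsum : (h : A) + Complex.I • (k : A) = 0 := congrArg Subtype.val hp
    have hdiff : (h : A) - Complex.I • (k : A) = 0 := by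
      simpa [star_smul, h.2.1.star_eq, k.2.1.star_eq, ← sub_eq_add_neg] using congrArg star hsum
    have hh : (h : A) = 0 := by
      have : (2 : ℂ) • (h : A) = 0 := by
        rw [two_smul]
        linear_combination (norm := module) hsum + hdiff
      simpa using this
    have hk : (k : A) = 0 := by simpa [hh] using hsum
    ext <;> simp [hh, hk]
  have := LinearMap.finrank_le_finrank_of_injective hφ
  rw [finrank_prod, ← finrank_mul_finrank ℝ ℂ W, Complex.finrank_real_complex] at this
  omega

end SelfAdjoint

section PartialTrace

variable {d : ℕ}

theorem ptraceLeft_kronecker (A B : Matrix (Fin d) (Fin d) ℂ) :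
    ptraceLeft (A ⊗ₖ B) = A.trace • B := by
  ext i j
  simp [ptraceLeft, trace, Finset.sum_mul]

theorem ptraceRight_kronecker (A B : Matrix (Fin d) (Fin d) ℂ) :
    ptraceRight (A ⊗ₖ B) = B.trace • A := by
  ext i j
  simp [ptraceRight, trace, Finset.mul_sum, mul_comm]

variable (d) in
noncomputable def ptraces : Matrix (Fin d × Fin d) (Fin d × Fin d) ℂ →ₗ[ℂ]
    Matrix (Fin d) (Fin d) ℂ × Matrix (Fin d) (Fin d) ℂ where
  toFun M := (ptraceLeft M, ptraceRight M)
  map_add' M N := by ext <;> simp [ptraceLeft, ptraceRight, Finset.sum_add_distrib]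
  map_smul' c M := by ext <;> simp [ptraceLeft, ptraceRight, Finset.mul_sum]

theorem ptraces_apply (M : Matrix (Fin d × Fin d) (Fin d × Fin d) ℂ) :
    ptraces d M = (ptraceLeft M, ptraceRight M) := rfl

variable (d) in
noncomputable def kroneckerSum :
    Matrix (Fin d) (Fin d) ℂ × Matrix (Fin d) (Fin d) ℂ →ₗ[ℂ]
    Matrix (Fin d × Fin d) (Fin d × Fin d) ℂ where
  toFun p := p.1 ⊗ₖ 1 + 1 ⊗ₖ p.2
  map_add' p q := by simp only [Prod.fst_add, Prod.snd_add, add_kronecker, kronecker_add]; abel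
  map_smul' c p := by simp [smul_kronecker, kronecker_smul, smul_add]

theorem ptraces_kroneckerSum (A B : Matrix (Fin d) (Fin d) ℂ) :
    ptraces d (kroneckerSum d (A, B)) =
      (A.trace • 1 + (d : ℂ) • B, (d : ℂ) • A + B.trace • 1) := by
  simp only [kroneckerSum, LinearMap.coe_mk, AddHom.coe_mk, map_add, ptraces_apply,
    ptraceLeft_kronecker, ptraceRight_kronecker, trace_one, Fintype.card_fin, Prod.mk_add_mk]

theorem ker_ptraces_comp_kroneckerSum_le :
    LinearMap.ker ((ptraces d).comp (kroneckerSum d)) ≤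
      ℂ ∙ ((1 : Matrix (Fin d) (Fin d) ℂ), -1) := by
  rintro ⟨A, B⟩ hAB
  rw [LinearMap.mem_ker, LinearMap.comp_apply, ptraces_kroneckerSum, Prod.mk_eq_zero] at hAB
  obtain ⟨hL, hR⟩ := hAB
  rcases Nat.eq_zero_or_pos d with rfl | hd
  · rw [Subsingleton.elim A 0, Subsingleton.elim B 0]
    exact Submodule.zero_mem _
  have hd' : (d : ℂ) ≠ 0 := by exact_mod_cast hd.ne'
  refine Submodule.mem_span_singleton.mpr ⟨-B.trace / d, ?_⟩
  have hA : A = (-B.trace / d) • 1 := by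
    apply smul_right_injective _ hd'
    change (d : ℂ) • A = (d : ℂ) • ((-B.trace / d) • 1)
    rw [smul_smul, mul_div_cancel₀ _ hd', neg_smul]
    exact eq_neg_of_add_eq_zero_left hR
  have htr : A.trace = -B.trace := by
    rw [hA, trace_smul, trace_one, Fintype.card_fin, smul_eq_mul, div_mul_cancel₀ _ hd']
  have hB : B = (B.trace / d) • 1 := by
    apply smul_right_injective _ hd'
    change (d : ℂ) • B = (d : ℂ) • ((B.trace / d) • 1)
    rw [smul_smul, mul_div_cancel₀ _ hd']
    rw [htr, neg_smul] at hL
    exact (neg_add_eq_zero.mp hL).symm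
  rw [Prod.smul_mk, smul_neg, ← neg_smul, ← neg_div, neg_neg, ← hA, ← hB]

theorem finrank_ker_ptraces_add_le :
    finrank ℂ (LinearMap.ker (ptraces d)) + 2 * d ^ 2 ≤ d ^ 4 + 1 := by
  have hcomp := LinearMap.finrank_range_add_finrank_ker ((ptraces d).comp (kroneckerSum d))
  have hT := LinearMap.finrank_range_add_finrank_ker (ptraces d)
  have hker : finrank ℂ (LinearMap.ker ((ptraces d).comp (kroneckerSum d))) ≤ 1 :=
    (Submodule.finrank_mono ker_ptraces_comp_kroneckerSum_le).trans
      ((finrank_span_le_card _).trans (by simp))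
  have hrange :=
    Submodule.finrank_mono (LinearMap.range_comp_le_range (kroneckerSum d) (ptraces d))
  simp only [finrank_prod, finrank_matrix, Fintype.card_prod, Fintype.card_fin, finrank_self,
    mul_one] at hcomp hT
  rw [show d ^ 4 = d * d * (d * d) by ring, show 2 * d ^ 2 = d * d + d * d by ring]
  omega

end PartialTrace

section Unitary

variable {d : ℕ}

theorem isSelfAdjoint_outer (A : Matrix (Fin d) (Fin d) ℂ) : IsSelfAdjoint (outer A) := by
  rw [outer, IsSelfAdjoint, star_eq_conjTranspose, conjTranspose_vecMulVec, star_star]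

theorem ptraceLeft_outer (A : Matrix (Fin d) (Fin d) ℂ) :
    ptraceLeft (outer A) = (Aᴴ * A)ᵀ := by
  ext i j
  simp [ptraceLeft, outer, _root_.vec, vecMulVec_apply, mul_apply, mul_comm]

theorem ptraceRight_outer (A : Matrix (Fin d) (Fin d) ℂ) : ptraceRight (outer A) = A * Aᴴ := by
  ext i j
  simp [ptraceRight, outer, _root_.vec, vecMulVec_apply, mul_apply]

theorem ptraces_outer_of_mem_unitaryGroup {U : Matrix (Fin d) (Fin d) ℂ}
    (hU : U ∈ unitaryGroup (Fin d) ℂ) : ptraces d (outer U) = (1, 1) := by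
  rw [ptraces_apply, ptraceLeft_outer, ptraceRight_outer, ← star_eq_conjTranspose,
    Unitary.star_mul_self_of_mem hU, Unitary.mul_star_self_of_mem hU, transpose_one]

theorem finrank_vectorSpan_range_outer_add_le :
    finrank ℝ (vectorSpan ℝ (Set.range fun U : unitaryGroup (Fin d) ℂ =>
      outer (U : Matrix (Fin d) (Fin d) ℂ))) + 2 * d ^ 2 ≤ d ^ 4 + 1 := by
  have hspan : vectorSpan ℝ (Set.range fun U : unitaryGroup (Fin d) ℂ =>
      outer (U : Matrix (Fin d) (Fin d) ℂ)) ≤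
      selfAdjoint.submodule ℝ _ ⊓ (LinearMap.ker (ptraces d)).restrictScalars ℝ := by
    rw [vectorSpan_def, Submodule.span_le]
    rintro _ ⟨_, ⟨U, rfl⟩, _, ⟨V, rfl⟩, rfl⟩
    refine ⟨(isSelfAdjoint_outer _).sub (isSelfAdjoint_outer _), ?_⟩
    change ptraces d (outer U - outer V) = 0
    rw [map_sub, ptraces_outer_of_mem_unitaryGroup U.2, ptraces_outer_of_mem_unitaryGroup V.2,
      sub_self]
  have := (Submodule.finrank_mono hspan).trans (finrank_selfAdjoint_inf_restrictScalars_le _)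
  have := finrank_ker_ptraces_add_le (d := d)
  omega

theorem isCompact_unitaryGroup :
    IsCompact (unitaryGroup (Fin d) ℂ : Set (Matrix (Fin d) (Fin d) ℂ)) :=
  IsCompact.of_isClosed_subset
    (isCompact_univ_pi fun _ => isCompact_univ_pi fun _ => isCompact_closedBall (0 : ℂ) 1)
    (isClosed_unitary (R := Matrix (Fin d) (Fin d) ℂ))
    fun _ hU i _ j _ => mem_closedBall_zero_iff.mpr (entry_norm_bound_of_unitary hU i j)

instance : CompactSpace (unitaryGroup (Fin d) ℂ) :=
  isCompact_iff_compactSpace.mp isCompact_unitaryGroup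

instance : OpensMeasurableSpace (unitaryGroup (Fin d) ℂ) :=
  have : BorelSpace (Matrix (Fin d) (Fin d) ℂ) :=
    inferInstanceAs (BorelSpace (Fin d → Fin d → ℂ))
  Subtype.opensMeasurableSpace _

variable (d) in
noncomputable def conjEntry (X : Matrix (Fin d) (Fin d) ℂ) (a b : Fin d) :
    Matrix (Fin d × Fin d) (Fin d × Fin d) ℂ →ₗ[ℂ] ℂ where
  toFun M := ∑ i, ∑ j, M (a, i) (b, j) * X i j
  map_add' M N := by simp [add_mul, Finset.sum_add_distrib]
  map_smul' c M := by simp [Finset.mul_sum, mul_assoc]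

theorem conjEntry_outer (X U : Matrix (Fin d) (Fin d) ℂ) (a b : Fin d) :
    conjEntry d X a b (outer U) = (U * X * star U) a b := by
  simp only [conjEntry, LinearMap.coe_mk, AddHom.coe_mk, outer, _root_.vec, vecMulVec_apply,
    mul_apply, star_apply, Pi.star_apply, Finset.sum_mul]
  rw [Finset.sum_comm]
  exact Finset.sum_congr rfl fun i _ => Finset.sum_congr rfl fun j _ => by ring

theorem continuous_outer_unitary :
    Continuous fun U : unitaryGroup (Fin d) ℂ => outer (U : Matrix (Fin d) (Fin d) ℂ) := by
  refine continuous_pi fun p => continuous_pi fun q => ?_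
  simp only [outer, _root_.vec, vecMulVec_apply, Pi.star_apply]
  exact (continuous_subtype_val.matrix_elem _ _).mul
    (continuous_star.comp (continuous_subtype_val.matrix_elem _ _))

-- Any norm on matrices serves for the Bochner integral; the statement does not depend on it.
open scoped Matrix.Norms.Elementwise in
theorem exists_integral_outer_eq_convex_combination (ν : Measure (unitaryGroup (Fin d) ℂ))
    [IsProbabilityMeasure ν] :
    ∃ N ≤ finrank ℝ (vectorSpan ℝ (Set.range fun U : unitaryGroup (Fin d) ℂ =>
      outer (U : Matrix (Fin d) (Fin d) ℂ))) + 1,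
    ∃ (p : Fin N → ℝ) (U : Fin N → unitaryGroup (Fin d) ℂ),
      (∀ i, 0 ≤ p i) ∧ ∑ i, p i = 1 ∧
      ∀ L : Matrix (Fin d × Fin d) (Fin d × Fin d) ℂ →ₗ[ℂ] ℂ,
        ∫ V, L (outer (V : Matrix (Fin d) (Fin d) ℂ)) ∂ν =
          ∑ i, (p i : ℂ) * L (outer (U i : Matrix (Fin d) (Fin d) ℂ)) := by
  obtain ⟨N, hN, p, U, hp0, hp1, hJ⟩ :=
    exists_integral_eq_convex_combination ν continuous_outer_unitary
  refine ⟨N, hN, p, U, hp0, hp1, fun L => ?_⟩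
  have hint :=
    continuous_outer_unitary.integrable_of_hasCompactSupport (μ := ν) (.of_compactSpace _)
  calc ∫ V, L (outer (V : Matrix (Fin d) (Fin d) ℂ)) ∂ν
      = L (∫ V, outer (V : Matrix (Fin d) (Fin d) ℂ) ∂ν) :=
        (LinearMap.toContinuousLinearMap L).integral_comp_comm hint
    _ = ∑ i, (p i : ℂ) * L (outer (U i : Matrix (Fin d) (Fin d) ℂ)) := by
        simp [hJ, Complex.real_smul]

end Unitary

theorem stmt11 (d : ℕ) (ν : Measure (Matrix.unitaryGroup (Fin d) ℂ))
    [IsProbabilityMeasure ν] :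
    ∃ N : ℕ, N ≤ d ^ 4 - 2 * d ^ 2 + 2 ∧
      ∃ (p : Fin N → ℝ) (U : Fin N → Matrix.unitaryGroup (Fin d) ℂ),
        (∀ i, 0 ≤ p i) ∧ (∑ i, p i) = 1 ∧
        ∀ (X : Matrix (Fin d) (Fin d) ℂ) (a b : Fin d),
          (∫ V, ((V : Matrix (Fin d) (Fin d) ℂ) * X * star (V : Matrix (Fin d) (Fin d) ℂ)) a b ∂ν)
            = ∑ i, (p i : ℂ) * (((U i : Matrix (Fin d) (Fin d) ℂ) * X * star (U i : Matrix (Fin d) (Fin d) ℂ)) a b) := by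
  obtain ⟨N, hN, p, U, hp0, hp1, hL⟩ := exists_integral_outer_eq_convex_combination ν
  have hdim := finrank_vectorSpan_range_outer_add_le (d := d)
  refine ⟨N, by omega, p, U, hp0, hp1, fun X a b => ?_⟩
  simpa only [conjEntry_outer] using hL (conjEntry d X a b)
end
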